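/- arXiv:2106.15511 — 2 statements merged into one kernel-verified Lean document; each statement's English description precedes it below -/
import Mathlib

section
/- Let a, b, c, S, L be nonnegative reals satisfying a + b + c = S + L and the strict inequality (p+κ−1)a + (q+κ−1)b + (p⁎+κ−1)c > (q₁+κ−1)L. Then a/p + b/q + c/p⁎ − S/(1−κ) − L/q₁ < 0. -/
/-- The energy is negative on `N_λ⁺`: algebraic core of Proposition 3.2. -/
theorem stmt_7 (κ p q pb q₁ : ℝ)
    (hκ0 : 0 < κ) (hκ1 : κ < 1) (hp : 1 < p) (hpq : p < q) (hqq₁ : q < q₁)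
    (hpb : 1 < pb) (hpbq₁ : pb < q₁)
    (a b c S L : ℝ) (ha : 0 ≤ a) (hb : 0 ≤ b) (hc : 0 ≤ c) (hS : 0 ≤ S)
    (hL : 0 ≤ L) (hN : a + b + c = S + L)
    (hplus : (p + κ - 1) * a + (q + κ - 1) * b + (pb + κ - 1) * c
      > (q₁ + κ - 1) * L) :
    a / p + b / q + c / pb - S / (1 - κ) - L / q₁ < 0 := by
  have hp0 : (0:ℝ) < p := by linarith
  have hq0 : (0:ℝ) < q := by linarith
  have hpb0 : (0:ℝ) < pb := by linarith
  have hq10 : (0:ℝ) < q₁ := by linarith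
  have h1κ : (0:ℝ) < 1 - κ := by linarith
  have hS' : S = a + b + c - L := by linarith
  subst hS'
  have hD : (0:ℝ) < p * q * pb * (1 - κ) * q₁ := by positivity
  have e : a / p + b / q + c / pb - (a + b + c - L) / (1 - κ) - L / q₁ =
      (a * (q * pb * q₁ * (1 - κ - p)) + b * (p * pb * q₁ * (1 - κ - q))
        + c * (p * q * q₁ * (1 - κ - pb)) + L * (p * q * pb * (q₁ - 1 + κ)))
      / (p * q * pb * (1 - κ) * q₁) := by
    field_simp
    ring
  rw [e]
  apply div_neg_of_neg_of_pos _ hD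
  have h1 : 0 ≤ a * (q * pb * (p + κ - 1) * (q₁ - p)) := by
    exact mul_nonneg ha (mul_nonneg (mul_nonneg (mul_nonneg hq0.le hpb0.le)
      (by linarith)) (by linarith))
  have h2 : 0 ≤ b * (p * pb * (q + κ - 1) * (q₁ - q)) := by
    exact mul_nonneg hb (mul_nonneg (mul_nonneg (mul_nonneg hp0.le hpb0.le)
      (by linarith)) (by linarith))
  have h3 : 0 ≤ c * (p * q * (pb + κ - 1) * (q₁ - pb)) := by
    exact mul_nonneg hc (mul_nonneg (mul_nonneg (mul_nonneg hp0.le hq0.le)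
      (by linarith)) (by linarith))
  have hm := mul_lt_mul_of_pos_left hplus (show (0:ℝ) < p * q * pb by positivity)
  nlinarith [h1, h2, h3, hm]
end

section
/- Let κ, p, q, p⁎, q₁ be reals with 0 < κ < 1, 1 < p < q < q₁ and 1 < p⁎ < q₁. Let a > 0, b, c ≥ 0 and S > 0, and define η(t) = a t^{p−q₁} + b t^{q−q₁} + c t^{p⁎−q₁} − S t^{1−κ−q₁} for t > 0. Then η(t) → −∞ as t → 0⁺, η(t) → 0 as t → +∞, there is a unique t° > 0 with η'(t°) = 0, η is strictly increasing on (0, t°) and strictly decreasing on (t°, ∞), and η(t°) = max_{t>0} η(t). -/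
open Filter

/-- Unimodality of the auxiliary function
`η(t) = a t^{p−q₁} + b t^{q−q₁} + c t^{p⁎−q₁} − S t^{1−κ−q₁}`
(proof of Proposition 3.4). -/
theorem stmt_12 (κ p q pb q₁ : ℝ) (hκ0 : 0 < κ) (hκ1 : κ < 1) (hp : 1 < p)
    (hpq : p < q) (hqq₁ : q < q₁) (hpb : 1 < pb) (hpbq₁ : pb < q₁)
    (a b c S : ℝ) (ha : 0 < a) (hb : 0 ≤ b) (hc : 0 ≤ c) (hS : 0 < S)
    (η : ℝ → ℝ)
    (hη : ∀ t, 0 < t →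
      η t = a * t ^ (p - q₁) + b * t ^ (q - q₁) + c * t ^ (pb - q₁)
        - S * t ^ (1 - κ - q₁)) :
    Tendsto η (nhdsWithin 0 (Set.Ioi (0 : ℝ))) atBot
      ∧ Tendsto η atTop (nhds 0)
      ∧ ∃ t₀ : ℝ, 0 < t₀ ∧ deriv η t₀ = 0
          ∧ (∀ t, 0 < t → deriv η t = 0 → t = t₀)
          ∧ StrictMonoOn η (Set.Ioc 0 t₀)
          ∧ StrictAntiOn η (Set.Ici t₀)
          ∧ ∀ t, 0 < t → η t ≤ η t₀ := by
  have hq₁1 : 1 < q₁ := lt_trans (lt_trans hp hpq) hqq₁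
  have he1 : (0:ℝ) < p - 1 + κ := by linarith
  have he2 : (0:ℝ) < q - 1 + κ := by linarith
  have he3 : (0:ℝ) < pb - 1 + κ := by linarith
  have hcoef1 : a * (p - q₁) < 0 := mul_neg_of_pos_of_neg ha (by linarith)
  have hcoef2 : b * (q - q₁) ≤ 0 :=
    mul_nonpos_iff.2 (Or.inl ⟨hb, by linarith⟩)
  have hcoef3 : c * (pb - q₁) ≤ 0 :=
    mul_nonpos_iff.2 (Or.inl ⟨hc, by linarith⟩)
  have hC : 0 < S * (q₁ - 1 + κ) := mul_pos hS (by linarith)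
  set g : ℝ → ℝ := fun t => a * (p - q₁) * t ^ (p - 1 + κ)
      + b * (q - q₁) * t ^ (q - 1 + κ) + c * (pb - q₁) * t ^ (pb - 1 + κ)
      + S * (q₁ - 1 + κ) with hg
  -- g is strictly antitone on [0, ∞)
  have hganti : StrictAntiOn g (Set.Ici (0:ℝ)) := by
    intro x hx y hy hxy
    have h1 : a * (p - q₁) * y ^ (p - 1 + κ) < a * (p - q₁) * x ^ (p - 1 + κ) :=
      mul_lt_mul_of_neg_left (Real.rpow_lt_rpow hx hxy he1) hcoef1
    have h2 : b * (q - q₁) * y ^ (q - 1 + κ) ≤ b * (q - q₁) * x ^ (q - 1 + κ) :=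
      mul_le_mul_of_nonpos_left (Real.rpow_le_rpow hx hxy.le he2.le) hcoef2
    have h3 : c * (pb - q₁) * y ^ (pb - 1 + κ) ≤ c * (pb - q₁) * x ^ (pb - 1 + κ) :=
      mul_le_mul_of_nonpos_left (Real.rpow_le_rpow hx hxy.le he3.le) hcoef3
    simp only [hg]
    linarith
  have hgcont : Continuous g := by
    have hce : ∀ e : ℝ, 0 < e → Continuous fun t : ℝ => t ^ e := fun e he =>
      continuous_iff_continuousAt.2 fun x => Real.continuousAt_rpow_const x e (Or.inr he.le)
    exact (((continuous_const.mul (hce _ he1)).add (continuous_const.mul (hce _ he2))).add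
      (continuous_const.mul (hce _ he3))).add continuous_const
  have hg0 : g 0 = S * (q₁ - 1 + κ) := by
    simp [hg, Real.zero_rpow he1.ne', Real.zero_rpow he2.ne', Real.zero_rpow he3.ne']
  -- g is eventually negative
  have hT : ∃ T : ℝ, 0 < T ∧ g T < 0 := by
    have hbound : ∀ t : ℝ, 0 ≤ t →
        g t ≤ a * (p - q₁) * t ^ (p - 1 + κ) + S * (q₁ - 1 + κ) := by
      intro t ht
      have h2 : b * (q - q₁) * t ^ (q - 1 + κ) ≤ 0 :=
        mul_nonpos_iff.2 (Or.inr ⟨hcoef2, Real.rpow_nonneg ht _⟩)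
      have h3 : c * (pb - q₁) * t ^ (pb - 1 + κ) ≤ 0 :=
        mul_nonpos_iff.2 (Or.inr ⟨hcoef3, Real.rpow_nonneg ht _⟩)
      simp only [hg]; linarith
    have h1 : Tendsto (fun t : ℝ => a * (p - q₁) * t ^ (p - 1 + κ)
        + S * (q₁ - 1 + κ)) atTop atBot := by
      apply Filter.tendsto_atBot_add_const_right
      have := (tendsto_rpow_atTop he1).atTop_mul_neg hcoef1 tendsto_const_nhds
      apply this.congr
      intro t; ring
    have h2 := (h1.eventually_lt_atBot 0).and (eventually_gt_atTop (0:ℝ))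
    obtain ⟨T, hT1, hT2⟩ := h2.exists
    exact ⟨T, hT2, lt_of_le_of_lt (hbound T hT2.le) hT1⟩
  obtain ⟨T, hTpos, hgT⟩ := hT
  have hmem : (0:ℝ) ∈ Set.Ioo (g T) (g 0) := ⟨hgT, by rw [hg0]; exact hC⟩
  obtain ⟨t₀, ht₀mem, hgt₀⟩ := intermediate_value_Ioo' hTpos.le hgcont.continuousOn hmem
  have ht₀pos : 0 < t₀ := ht₀mem.1
  -- derivative of η
  have hderiv : ∀ t : ℝ, 0 < t → HasDerivAt η (t ^ (-κ - q₁) * g t) t := by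
    intro t ht
    have h1 : HasDerivAt (fun s : ℝ => s ^ (p - q₁)) ((p - q₁) * t ^ (p - q₁ - 1)) t :=
      Real.hasDerivAt_rpow_const (Or.inl ht.ne')
    have h2 : HasDerivAt (fun s : ℝ => s ^ (q - q₁)) ((q - q₁) * t ^ (q - q₁ - 1)) t :=
      Real.hasDerivAt_rpow_const (Or.inl ht.ne')
    have h3 : HasDerivAt (fun s : ℝ => s ^ (pb - q₁)) ((pb - q₁) * t ^ (pb - q₁ - 1)) t :=
      Real.hasDerivAt_rpow_const (Or.inl ht.ne')
    have h4 : HasDerivAt (fun s : ℝ => s ^ (1 - κ - q₁)) ((1 - κ - q₁) * t ^ (1 - κ - q₁ - 1)) t :=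
      Real.hasDerivAt_rpow_const (Or.inl ht.ne')
    have H : HasDerivAt (fun s : ℝ => a * s ^ (p - q₁) + b * s ^ (q - q₁)
        + c * s ^ (pb - q₁) - S * s ^ (1 - κ - q₁))
        (a * ((p - q₁) * t ^ (p - q₁ - 1)) + b * ((q - q₁) * t ^ (q - q₁ - 1))
          + c * ((pb - q₁) * t ^ (pb - q₁ - 1)) - S * ((1 - κ - q₁) * t ^ (1 - κ - q₁ - 1))) t :=
      (((h1.const_mul a).add (h2.const_mul b)).add (h3.const_mul c)).sub (h4.const_mul S)
    have hev : η =ᶠ[nhds t] fun s : ℝ => a * s ^ (p - q₁) + b * s ^ (q - q₁)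
        + c * s ^ (pb - q₁) - S * s ^ (1 - κ - q₁) :=
      Filter.eventuallyEq_of_mem (Ioi_mem_nhds ht) fun s hs => hη s hs
    have veq : t ^ (-κ - q₁) * g t
        = a * ((p - q₁) * t ^ (p - q₁ - 1)) + b * ((q - q₁) * t ^ (q - q₁ - 1))
          + c * ((pb - q₁) * t ^ (pb - q₁ - 1)) - S * ((1 - κ - q₁) * t ^ (1 - κ - q₁ - 1)) := by
      have k1 : t ^ (p - q₁ - 1) = t ^ (-κ - q₁) * t ^ (p - 1 + κ) := by
        rw [← Real.rpow_add ht]; congr 1; ring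
      have k2 : t ^ (q - q₁ - 1) = t ^ (-κ - q₁) * t ^ (q - 1 + κ) := by
        rw [← Real.rpow_add ht]; congr 1; ring
      have k3 : t ^ (pb - q₁ - 1) = t ^ (-κ - q₁) * t ^ (pb - 1 + κ) := by
        rw [← Real.rpow_add ht]; congr 1; ring
      have k4 : t ^ (1 - κ - q₁ - 1) = t ^ (-κ - q₁) := by congr 1; ring
      simp only [hg]
      rw [k1, k2, k3, k4]
      ring
    have := H.congr_of_eventuallyEq hev
    rwa [← veq] at this
  have hderiv' : ∀ t : ℝ, 0 < t → deriv η t = t ^ (-κ - q₁) * g t :=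
    fun t ht => (hderiv t ht).deriv
  have hdt₀ : deriv η t₀ = 0 := by rw [hderiv' t₀ ht₀pos, hgt₀, mul_zero]
  have huniq : ∀ t, 0 < t → deriv η t = 0 → t = t₀ := by
    intro t ht hdt
    rw [hderiv' t ht] at hdt
    have hgt : g t = 0 := by
      rcases mul_eq_zero.1 hdt with h | h
      · exact absurd h (Real.rpow_pos_of_pos ht _).ne'
      · exact h
    exact hganti.injOn ht.le ht₀pos.le (by rw [hgt, hgt₀])
  have hpos : ∀ t, 0 < t → t < t₀ → 0 < deriv η t := by
    intro t ht htt
    rw [hderiv' t ht]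
    have hgpos : 0 < g t := by
      have := hganti (Set.mem_Ici.2 ht.le) (Set.mem_Ici.2 ht₀pos.le) htt
      rwa [hgt₀] at this
    exact mul_pos (Real.rpow_pos_of_pos ht _) hgpos
  have hneg : ∀ t, t₀ < t → deriv η t < 0 := by
    intro t htt
    have ht : 0 < t := ht₀pos.trans htt
    rw [hderiv' t ht]
    have hgneg : g t < 0 := by
      have := hganti (Set.mem_Ici.2 ht₀pos.le) (Set.mem_Ici.2 ht.le) htt
      rwa [hgt₀] at this
    exact mul_neg_of_pos_of_neg (Real.rpow_pos_of_pos ht _) hgneg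
  have hmono : StrictMonoOn η (Set.Ioc 0 t₀) := by
    apply strictMonoOn_of_deriv_pos (convex_Ioc 0 t₀)
    · intro x hx
      exact (hderiv x hx.1).differentiableAt.continuousAt.continuousWithinAt
    · rw [interior_Ioc]
      intro x hx
      exact hpos x hx.1 hx.2
  have hanti : StrictAntiOn η (Set.Ici t₀) := by
    apply strictAntiOn_of_deriv_neg (convex_Ici t₀)
    · intro x hx
      exact (hderiv x (lt_of_lt_of_le ht₀pos hx)).differentiableAt.continuousAt.continuousWithinAt
    · rw [interior_Ici]
      intro x hx
      exact hneg x hx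
  have hmax : ∀ t, 0 < t → η t ≤ η t₀ := by
    intro t ht
    rcases le_or_gt t t₀ with h | h
    · rcases lt_or_eq_of_le h with h' | h'
      · exact (hmono ⟨ht, h⟩ ⟨ht₀pos, le_rfl⟩ h').le
      · rw [h']
    · exact (hanti (Set.mem_Ici.2 le_rfl) (Set.mem_Ici.2 h.le) h).le
  -- limit at 0⁺
  have hz0 : ∀ e : ℝ, 0 < e →
      Tendsto (fun t : ℝ => t ^ e) (nhdsWithin 0 (Set.Ioi (0:ℝ))) (nhds 0) := by
    intro e he
    have h := (Real.continuousAt_rpow_const 0 e (Or.inr he.le)).tendsto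
    rw [Real.zero_rpow he.ne'] at h
    exact h.mono_left nhdsWithin_le_nhds
  have hlim0 : Tendsto η (nhdsWithin 0 (Set.Ioi (0:ℝ))) atBot := by
    have hmain : Tendsto (fun t : ℝ => t ^ (1 - κ - q₁)) (nhdsWithin 0 (Set.Ioi (0:ℝ))) atTop := by
      have h1 : Tendsto (fun t : ℝ => (t⁻¹) ^ (q₁ + κ - 1)) (nhdsWithin 0 (Set.Ioi (0:ℝ))) atTop :=
        (tendsto_rpow_atTop (by linarith)).comp tendsto_inv_nhdsGT_zero
      apply h1.congr'
      filter_upwards [self_mem_nhdsWithin] with t ht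
      have ht' : (0:ℝ) < t := ht
      rw [Real.inv_rpow ht'.le, ← Real.rpow_neg ht'.le,
        show -(q₁ + κ - 1) = 1 - κ - q₁ from by ring]
    have hcoe : Tendsto (fun t : ℝ => a * t ^ (p - 1 + κ) + b * t ^ (q - 1 + κ)
        + c * t ^ (pb - 1 + κ) - S) (nhdsWithin 0 (Set.Ioi (0:ℝ))) (nhds (-S)) := by
      have h := ((((hz0 _ he1).const_mul a).add ((hz0 _ he2).const_mul b)).add
        ((hz0 _ he3).const_mul c)).sub_const S
      simpa using h
    have h := hmain.atTop_mul_neg (by linarith : -S < 0) hcoe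
    apply h.congr'
    filter_upwards [self_mem_nhdsWithin] with t ht
    have ht' : (0:ℝ) < t := ht
    have l1 : t ^ (p - q₁) = t ^ (1 - κ - q₁) * t ^ (p - 1 + κ) := by
      rw [← Real.rpow_add ht']; congr 1; ring
    have l2 : t ^ (q - q₁) = t ^ (1 - κ - q₁) * t ^ (q - 1 + κ) := by
      rw [← Real.rpow_add ht']; congr 1; ring
    have l3 : t ^ (pb - q₁) = t ^ (1 - κ - q₁) * t ^ (pb - 1 + κ) := by
      rw [← Real.rpow_add ht']; congr 1; ring
    rw [hη t ht', l1, l2, l3]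
    ring
  -- limit at ∞
  have hlimtop : Tendsto η atTop (nhds 0) := by
    have hz : ∀ e : ℝ, e < 0 → Tendsto (fun t : ℝ => t ^ e) atTop (nhds 0) := by
      intro e he
      have h := tendsto_rpow_neg_atTop (y := -e) (by linarith)
      simpa using h
    have h := ((((hz _ (by linarith : p - q₁ < 0)).const_mul a).add
      ((hz _ (by linarith : q - q₁ < 0)).const_mul b)).add
      ((hz _ (by linarith : pb - q₁ < 0)).const_mul c)).sub
      ((hz _ (by linarith : 1 - κ - q₁ < 0)).const_mul S)
    refine Tendsto.congr' ?_ (by simpa using h)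
    filter_upwards [eventually_gt_atTop (0:ℝ)] with t ht
    exact (hη t ht).symm
  exact ⟨hlim0, hlimtop, t₀, ht₀pos, hdt₀, huniq, hmono, hanti, hmax⟩
end
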